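/- arXiv:1903.00214 — 6 statements merged into one kernel-verified Lean document; each statement's English description precedes it below -/
import Mathlib

section
/- Let Λ : [0,∞) → (0,∞) be a C² function with Λ' < 0, Λ(t) → 0 as t → ∞, and suppose Λ''(t) ≥ -K·Λ'(t) + θ·Λ'(t)²/Λ(t) for all t ≥ 0, where K > 0 and θ ∈ [0,1). Then Λ(0)^(1-θ)/(1-θ) ≤ -Λ'(0)/(K·Λ(0)^θ). -/
open Filter Topology

/-!
Write `φ = -Λ' Λ^(-θ)`. The differential inequality says exactly `φ' ≤ -K φ`, so `e^{Kt} φ` is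
nonincreasing and `φ t ≤ φ 0 e^{-Kt}`. Since `φ` is minus the derivative of `F = Λ^(1-θ)/(1-θ)`,
which tends to `0`, integrating this bound over `[0, ∞)` gives `F 0 ≤ φ 0 / K`.
-/

open Real Set

section MonotoneOnIci

variable {f f' : ℝ → ℝ} {a : ℝ}

theorem monotoneOn_Ici_of_hasDerivAt_nonneg (hf : ∀ t ∈ Ici a, HasDerivAt f (f' t) t)
    (hf' : ∀ t ∈ Ici a, 0 ≤ f' t) : MonotoneOn f (Ici a) := by
  have hint : ∀ t ∈ interior (Ici a), t ∈ Ici a := fun t ht => interior_subset ht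
  exact monotoneOn_of_hasDerivWithinAt_nonneg (convex_Ici a)
    (fun t ht => (hf t ht).continuousAt.continuousWithinAt)
    (fun t ht => (hf t (hint t ht)).hasDerivWithinAt) (fun t ht => hf' t (hint t ht))

theorem antitoneOn_Ici_of_hasDerivAt_nonpos (hf : ∀ t ∈ Ici a, HasDerivAt f (f' t) t)
    (hf' : ∀ t ∈ Ici a, f' t ≤ 0) : AntitoneOn f (Ici a) := by
  have := monotoneOn_Ici_of_hasDerivAt_nonneg (f := -f) (fun t ht => (hf t ht).neg)
    (fun t ht => neg_nonneg.mpr (hf' t ht))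
  simpa using this.neg

end MonotoneOnIci

section Comparison

variable {K C : ℝ}

theorem le_mul_exp_of_hasDerivAt_le_neg_mul {φ φ' : ℝ → ℝ}
    (hφ : ∀ t ∈ Ici 0, HasDerivAt φ (φ' t) t) (hle : ∀ t ∈ Ici 0, φ' t ≤ -K * φ t)
    {t : ℝ} (ht : t ∈ Ici 0) : φ t ≤ φ 0 * exp (-K * t) := by
  have hanti : AntitoneOn (fun s => exp (K * s) * φ s) (Ici 0) := by
    refine antitoneOn_Ici_of_hasDerivAt_nonpos
      (f' := fun s => exp (K * s) * (K * φ s + φ' s)) (fun s hs => ?_) (fun s hs => ?_)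
    · exact ((((hasDerivAt_id s).const_mul K).exp).mul (hφ s hs)).congr_deriv (by simp; ring)
    · exact mul_nonpos_of_nonneg_of_nonpos (exp_pos _).le (by linarith [hle s hs])
  have hmono := hanti self_mem_Ici ht ht
  simp only [mul_zero, exp_zero, one_mul] at hmono
  calc φ t = exp (-K * t) * (exp (K * t) * φ t) := by
        rw [← mul_assoc, ← exp_add, neg_mul, neg_add_cancel, exp_zero, one_mul]
    _ ≤ exp (-K * t) * φ 0 := mul_le_mul_of_nonneg_left hmono (exp_pos _).le
    _ = φ 0 * exp (-K * t) := mul_comm _ _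

theorem le_div_of_hasDerivAt_ge_neg_mul_exp {F F' : ℝ → ℝ} (hK : 0 < K)
    (hF : ∀ t ∈ Ici 0, HasDerivAt F (F' t) t) (hge : ∀ t ∈ Ici 0, -(C * exp (-K * t)) ≤ F' t)
    (hlim : Tendsto F atTop (𝓝 0)) : F 0 ≤ C / K := by
  set ψ := fun t => F t - C / K * exp (-K * t)
  have hmono : MonotoneOn ψ (Ici 0) := by
    refine monotoneOn_Ici_of_hasDerivAt_nonneg
      (f' := fun t => F' t + C * exp (-K * t)) (fun t ht => ?_) (fun t ht => ?_)
    · refine ((hF t ht).sub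
        ((((hasDerivAt_id t).const_mul (-K)).exp).const_mul (C / K))).congr_deriv ?_
      simp only [id]
      field_simp
      ring
    · linarith [hge t ht]
  have hψlim : Tendsto ψ atTop (𝓝 0) := by
    have hexp : Tendsto (fun t => exp (-K * t)) atTop (𝓝 0) :=
      tendsto_exp_atBot.comp (tendsto_id.const_mul_atTop_of_neg (neg_lt_zero.mpr hK))
    simpa [ψ] using hlim.sub (hexp.const_mul (C / K))
  have hψ0 : ψ 0 ≤ 0 := ge_of_tendsto hψlim <|
    (eventually_ge_atTop 0).mono fun t ht => hmono self_mem_Ici ht ht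
  simpa [ψ] using hψ0

end Comparison

theorem rpow_one_sub_div_le_of_ode {Λ Λ' Λ'' : ℝ → ℝ} {K θ : ℝ} (hK : 0 < K) (hθ : θ < 1)
    (hΛ : ∀ t ∈ Ici 0, HasDerivAt Λ (Λ' t) t) (hΛ' : ∀ t ∈ Ici 0, HasDerivAt Λ' (Λ'' t) t)
    (hpos : ∀ t ∈ Ici 0, 0 < Λ t) (hlim : Tendsto Λ atTop (𝓝 0))
    (hODE : ∀ t ∈ Ici 0, -K * Λ' t + θ * Λ' t ^ 2 / Λ t ≤ Λ'' t) :
    Λ 0 ^ (1 - θ) / (1 - θ) ≤ -Λ' 0 * Λ 0 ^ (-θ) / K := by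
  have hrpow : ∀ t ∈ Ici 0, ∀ p, HasDerivAt (fun s => Λ s ^ p) (Λ' t * p * Λ t ^ (p - 1)) t :=
    fun t ht p => (hΛ t ht).rpow_const (Or.inl (hpos t ht).ne')
  have hφ : ∀ t ∈ Ici 0, HasDerivAt (fun s => -Λ' s * Λ s ^ (-θ))
      (Λ t ^ (-θ) * (θ * Λ' t ^ 2 / Λ t - Λ'' t)) t := by
    intro t ht
    refine ((hΛ' t ht).neg.mul (hrpow t ht (-θ))).congr_deriv ?_
    rw [Pi.neg_apply, rpow_sub_one (hpos t ht).ne']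
    ring
  have hφ_le : ∀ t ∈ Ici 0, Λ t ^ (-θ) * (θ * Λ' t ^ 2 / Λ t - Λ'' t) ≤
      -K * (-Λ' t * Λ t ^ (-θ)) := by
    intro t ht
    have := mul_le_mul_of_nonneg_left (hODE t ht) (rpow_pos_of_pos (hpos t ht) (-θ)).le
    linarith
  have hF : ∀ t ∈ Ici 0, HasDerivAt (fun s => Λ s ^ (1 - θ) / (1 - θ)) (Λ' t * Λ t ^ (-θ)) t := by
    intro t ht
    refine ((hrpow t ht (1 - θ)).div_const (1 - θ)).congr_deriv ?_
    field_simp [(sub_pos.mpr hθ).ne']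
    ring_nf
  have hF_lim : Tendsto (fun s => Λ s ^ (1 - θ) / (1 - θ)) atTop (𝓝 0) := by
    have := ((continuousAt_rpow_const 0 (1 - θ) (Or.inr (sub_pos.mpr hθ).le)).tendsto.comp
      hlim).div_const (1 - θ)
    rwa [zero_rpow (sub_pos.mpr hθ).ne', zero_div] at this
  refine le_div_of_hasDerivAt_ge_neg_mul_exp hK hF (fun t ht => ?_) hF_lim
  have := le_mul_exp_of_hasDerivAt_le_neg_mul hφ hφ_le ht
  linarith

theorem stmt_4_general (Λ : ℝ → ℝ) (K θ : ℝ) (hK : 0 < K) (hθ1 : θ < 1)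
    (hC2 : ContDiff ℝ 2 Λ)
    (hpos : ∀ t, 0 ≤ t → 0 < Λ t)
    (hlim : Tendsto Λ atTop (𝓝 0))
    (hODE : ∀ t, 0 ≤ t →
      deriv (deriv Λ) t ≥ -K * deriv Λ t + θ * (deriv Λ t) ^ 2 / Λ t) :
    Λ 0 ^ (1 - θ) / (1 - θ) ≤ -deriv Λ 0 / (K * Λ 0 ^ θ) := by
  have hΛ : Differentiable ℝ Λ := hC2.differentiable two_ne_zero
  have hΛ' : Differentiable ℝ (deriv Λ) :=
    (hC2.deriv' (n := 1)).differentiable one_ne_zero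
  have key := rpow_one_sub_div_le_of_ode hK hθ1 (fun t _ => (hΛ t).hasDerivAt)
    (fun t _ => (hΛ' t).hasDerivAt) hpos hlim hODE
  rwa [rpow_neg (hpos 0 le_rfl).le, ← div_eq_mul_inv, div_div, mul_comm] at key

theorem stmt_4 (Λ : ℝ → ℝ) (K θ : ℝ) (hK : 0 < K) (hθ0 : 0 ≤ θ) (hθ1 : θ < 1)
    (hC2 : ContDiff ℝ 2 Λ)
    (hpos : ∀ t, 0 ≤ t → 0 < Λ t)
    (hdec : ∀ t, 0 ≤ t → deriv Λ t < 0)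
    (hlim : Tendsto Λ atTop (𝓝 0))
    (hODE : ∀ t, 0 ≤ t →
      deriv (deriv Λ) t ≥ -K * deriv Λ t + θ * (deriv Λ t) ^ 2 / Λ t) :
    Λ 0 ^ (1 - θ) / (1 - θ) ≤ -deriv Λ 0 / (K * Λ 0 ^ θ) :=
  stmt_4_general Λ K θ hK hθ1 hC2 hpos hlim hODE
end

section
/- Let φ : ℝ → ℝ be smooth and positive, β ∈ ℝ, ρ ≥ 0, n ∈ ℝ \ [0,1], and let L f = φ f'' - (β-1) φ' f' with Γ(f) = φ(f')². Then the pointwise inequality Γ₂(f) ≥ ρ Γ(f) + (1/n)(Lf)² holds at a point x for all smooth f if and only if -(β - 1/2)((β - 1/2)/(n-1) + 1/2) · (φ'(x))²/φ(x) + (β - 1/2) φ''(x) - ρ ≥ 0. -/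
set_option maxHeartbeats 1000000

lemma quad_hasDerivAt (a b x y : ℝ) :
    HasDerivAt (fun y => a * (y - x) + b / 2 * (y - x) ^ 2) (a + b * (y - x)) y := by
  have h : HasDerivAt (fun y : ℝ => y - x) 1 y := (hasDerivAt_id y).sub_const x
  have := ((h.const_mul a).add ((h.pow 2).const_mul (b / 2)))
  refine HasDerivAt.congr_deriv this ?_
  ring

lemma quad_deriv (a b x : ℝ) :
    deriv (fun y => a * (y - x) + b / 2 * (y - x) ^ 2) x = a ∧
    deriv (deriv (fun y => a * (y - x) + b / 2 * (y - x) ^ 2)) x = b := by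
  have hd : deriv (fun y => a * (y - x) + b / 2 * (y - x) ^ 2) = fun y => a + b * (y - x) := by
    funext y; exact (quad_hasDerivAt a b x y).deriv
  constructor
  · rw [hd]; simp
  · rw [hd]
    have h2 : HasDerivAt (fun y : ℝ => a + b * (y - x)) b x := by
      have h : HasDerivAt (fun y : ℝ => y - x) 1 x := (hasDerivAt_id x).sub_const x
      have := (h.const_mul b).const_add a
      simpa using this
    simpa using h2.deriv

lemma quad_contDiff (a b x : ℝ) :
    ContDiff ℝ (⊤ : ℕ∞) (fun y => a * (y - x) + b / 2 * (y - x) ^ 2) := by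
  fun_prop

lemma arith_fwd (P D E β ρ n : ℝ) (hP : 0 < P) (hn0 : n ≠ 0) (hn1 : n - 1 ≠ 0)
    (hnn : 0 < n * (n - 1))
    (h : (1 / 2) * ((2 * β - 1) * P * E + (1 - β) * D ^ 2) * (2 * (n - 1) * P ^ 2) ^ 2
          + P * D * (2 * (n - 1) * P ^ 2) * (-((n + 2 * β - 2) * P * D))
          + P ^ 2 * (-((n + 2 * β - 2) * P * D)) ^ 2
        ≥ ρ * (P * (2 * (n - 1) * P ^ 2) ^ 2)
          + (1 / n) * (P * (-((n + 2 * β - 2) * P * D))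
              - (β - 1) * D * (2 * (n - 1) * P ^ 2)) ^ 2) :
    -(β - 1 / 2) * ((β - 1 / 2) / (n - 1) + 1 / 2) * D ^ 2 / P
        + (β - 1 / 2) * E - ρ ≥ 0 := by
  have hP' : P ≠ 0 := hP.ne'
  set N : ℝ := -(β - 1/2) * (4 * n * (β - 1/2) + 2 * n * (n - 1)) * D ^ 2
      + 4 * n * (n - 1) * P * ((β - 1/2) * E - ρ) with hN
  have hKN : -(β - 1 / 2) * ((β - 1 / 2) / (n - 1) + 1 / 2) * D ^ 2 / P
        + (β - 1 / 2) * E - ρ = N / (4 * (n * (n - 1)) * P) := by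
    rw [hN]; field_simp; ring
  have hdiff : 0 ≤ ((1 / 2) * ((2 * β - 1) * P * E + (1 - β) * D ^ 2) * (2 * (n - 1) * P ^ 2) ^ 2
          + P * D * (2 * (n - 1) * P ^ 2) * (-((n + 2 * β - 2) * P * D))
          + P ^ 2 * (-((n + 2 * β - 2) * P * D)) ^ 2)
        - (ρ * (P * (2 * (n - 1) * P ^ 2) ^ 2)
          + (1 / n) * (P * (-((n + 2 * β - 2) * P * D))
              - (β - 1) * D * (2 * (n - 1) * P ^ 2)) ^ 2) := sub_nonneg.mpr h
  have hid : N * (n * (n - 1)) * P ^ 4 =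
      n ^ 2 * (((1 / 2) * ((2 * β - 1) * P * E + (1 - β) * D ^ 2) * (2 * (n - 1) * P ^ 2) ^ 2
          + P * D * (2 * (n - 1) * P ^ 2) * (-((n + 2 * β - 2) * P * D))
          + P ^ 2 * (-((n + 2 * β - 2) * P * D)) ^ 2)
        - (ρ * (P * (2 * (n - 1) * P ^ 2) ^ 2)
          + (1 / n) * (P * (-((n + 2 * β - 2) * P * D))
              - (β - 1) * D * (2 * (n - 1) * P ^ 2)) ^ 2)) := by
    rw [hN]; field_simp; ring
  have hNpos : 0 ≤ N := by
    have h1 : 0 ≤ N * (n * (n - 1)) * P ^ 4 := by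
      rw [hid]; positivity
    nlinarith [pow_pos hP 4, mul_pos hnn (pow_pos hP 4)]
  rw [hKN]
  positivity

lemma arith_rev (P D E β ρ n a b : ℝ) (hP : 0 < P) (hn0 : n ≠ 0) (hn1 : n - 1 ≠ 0)
    (hnn : 0 < n * (n - 1))
    (hK : -(β - 1 / 2) * ((β - 1 / 2) / (n - 1) + 1 / 2) * D ^ 2 / P
        + (β - 1 / 2) * E - ρ ≥ 0) :
    (1 / 2) * ((2 * β - 1) * P * E + (1 - β) * D ^ 2) * a ^ 2
          + P * D * a * b + P ^ 2 * b ^ 2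
        ≥ ρ * (P * a ^ 2) + (1 / n) * (P * b - (β - 1) * D * a) ^ 2 := by
  have hP' : P ≠ 0 := hP.ne'
  set N : ℝ := -(β - 1/2) * (4 * n * (β - 1/2) + 2 * n * (n - 1)) * D ^ 2
      + 4 * n * (n - 1) * P * ((β - 1/2) * E - ρ) with hN
  have hKN : -(β - 1 / 2) * ((β - 1 / 2) / (n - 1) + 1 / 2) * D ^ 2 / P
        + (β - 1 / 2) * E - ρ = N / (4 * (n * (n - 1)) * P) := by
    rw [hN]; field_simp; ring
  have hd : (0:ℝ) < 4 * (n * (n - 1)) * P := by positivity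
  have hNpos : 0 ≤ N := by
    rw [hKN, ge_iff_le] at hK
    have h2 := mul_nonneg hK hd.le
    rwa [div_mul_cancel₀ _ hd.ne'] at h2
  rw [ge_iff_le, ← sub_nonneg]
  have hid : 4 * (n * (n - 1)) * P ^ 2 *
      (((1 / 2) * ((2 * β - 1) * P * E + (1 - β) * D ^ 2) * a ^ 2
          + P * D * a * b + P ^ 2 * b ^ 2)
        - (ρ * (P * a ^ 2) + (1 / n) * (P * b - (β - 1) * D * a) ^ 2)) =
      (2 * (n - 1) * P ^ 2 * b + (n + 2 * β - 2) * P * D * a) ^ 2 + P ^ 2 * N * a ^ 2 := by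
    rw [hN]; field_simp; ring
  have hpos : (0:ℝ) < 4 * (n * (n - 1)) * P ^ 2 := by positivity
  have h3 : 0 ≤ 4 * (n * (n - 1)) * P ^ 2 *
      (((1 / 2) * ((2 * β - 1) * P * E + (1 - β) * D ^ 2) * a ^ 2
          + P * D * a * b + P ^ 2 * b ^ 2)
        - (ρ * (P * a ^ 2) + (1 / n) * (P * b - (β - 1) * D * a) ^ 2)) := by
    rw [hid]
    exact add_nonneg (sq_nonneg _)
      (mul_nonneg (mul_nonneg (sq_nonneg P) hNpos) (sq_nonneg a))
  exact nonneg_of_mul_nonneg_right h3 hpos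

theorem stmt_7 (φ : ℝ → ℝ) (β ρ n : ℝ)
    (hφ : ContDiff ℝ (⊤ : ℕ∞) φ) (hφpos : ∀ x, 0 < φ x)
    (hρ : 0 ≤ ρ) (hn : n ∉ Set.Icc (0 : ℝ) 1) (x : ℝ) :
    (∀ f : ℝ → ℝ, ContDiff ℝ (⊤ : ℕ∞) f →
        (1 / 2) * ((2 * β - 1) * φ x * deriv (deriv φ) x + (1 - β) * (deriv φ x) ^ 2)
            * (deriv f x) ^ 2
          + φ x * deriv φ x * deriv f x * deriv (deriv f) x
          + (φ x) ^ 2 * (deriv (deriv f) x) ^ 2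
        ≥ ρ * (φ x * (deriv f x) ^ 2)
          + (1 / n) * (φ x * deriv (deriv f) x - (β - 1) * deriv φ x * deriv f x) ^ 2)
    ↔ -(β - 1 / 2) * ((β - 1 / 2) / (n - 1) + 1 / 2) * (deriv φ x) ^ 2 / φ x
        + (β - 1 / 2) * deriv (deriv φ) x - ρ ≥ 0 := by
  have hP : 0 < φ x := hφpos x
  simp only [Set.mem_Icc, not_and_or, not_le] at hn
  have hcase : n < 0 ∨ 1 < n := by tauto
  have hn0 : n ≠ 0 := by rcases hcase with h | h <;> intro he <;> rw [he] at h <;> linarith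
  have hn1 : n - 1 ≠ 0 := by rcases hcase with h | h <;> intro he <;> nlinarith
  have hnn : 0 < n * (n - 1) := by rcases hcase with h | h <;> nlinarith
  have hq : ∀ a b : ℝ,
      (1 / 2) * ((2 * β - 1) * φ x * deriv (deriv φ) x + (1 - β) * (deriv φ x) ^ 2) * a ^ 2
          + φ x * deriv φ x * a * b + (φ x) ^ 2 * b ^ 2
        ≥ ρ * (φ x * a ^ 2)
          + (1 / n) * (φ x * b - (β - 1) * deriv φ x * a) ^ 2 →
      ((1 / 2) * ((2 * β - 1) * φ x * deriv (deriv φ) x + (1 - β) * (deriv φ x) ^ 2)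
            * (deriv (fun y => a * (y - x) + b / 2 * (y - x) ^ 2) x) ^ 2
          + φ x * deriv φ x * deriv (fun y => a * (y - x) + b / 2 * (y - x) ^ 2) x
              * deriv (deriv (fun y => a * (y - x) + b / 2 * (y - x) ^ 2)) x
          + (φ x) ^ 2 * (deriv (deriv (fun y => a * (y - x) + b / 2 * (y - x) ^ 2)) x) ^ 2
        ≥ ρ * (φ x * (deriv (fun y => a * (y - x) + b / 2 * (y - x) ^ 2) x) ^ 2)
          + (1 / n) * (φ x * deriv (deriv (fun y => a * (y - x) + b / 2 * (y - x) ^ 2)) x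
              - (β - 1) * deriv φ x * deriv (fun y => a * (y - x) + b / 2 * (y - x) ^ 2) x) ^ 2) := by
    intro a b h
    rw [(quad_deriv a b x).1, (quad_deriv a b x).2]
    exact h
  constructor
  · intro H
    apply arith_fwd (φ x) (deriv φ x) (deriv (deriv φ) x) β ρ n hP hn0 hn1 hnn
    have := H (fun y => (2 * (n - 1) * (φ x) ^ 2) * (y - x)
        + (-((n + 2 * β - 2) * φ x * deriv φ x)) / 2 * (y - x) ^ 2)
      (quad_contDiff _ _ x)
    rwa [(quad_deriv (2 * (n - 1) * (φ x) ^ 2) (-((n + 2 * β - 2) * φ x * deriv φ x)) x).1,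
      (quad_deriv (2 * (n - 1) * (φ x) ^ 2) (-((n + 2 * β - 2) * φ x * deriv φ x)) x).2] at this
  · intro hK f hf
    exact arith_rev (φ x) (deriv φ x) (deriv (deriv φ) x) β ρ n (deriv f x)
      (deriv (deriv f) x) hP hn0 hn1 hnn hK
end

section
/- Let φ : ℝ → ℝ be smooth with φ > 0 and φ'' ≥ c > 0, and let β > 1. Then the operator L f = φ f'' - (β-1) φ' f' satisfies the curvature-dimension condition CD(c(β - 1/2), 2(1-β)), i.e., Γ₂(f) ≥ c(β - 1/2) Γ(f) + (1/(2(1-β))) (Lf)² for all smooth f, where Γ(f) = φ(f')². -/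
lemma aux_8 (a p s u v β c : ℝ) (ha : 0 < a) (hs : c ≤ s) (hc : 0 < c) (hβ : 1 < β) :
    (1 / 2) * ((2 * β - 1) * a * s + (1 - β) * p ^ 2) * u ^ 2
      + a * p * u * v + a ^ 2 * v ^ 2
    ≥ c * (β - 1 / 2) * (a * u ^ 2)
      + (1 / (2 * (1 - β))) * (a * v - (β - 1) * p * u) ^ 2 := by
  have hb : (0:ℝ) < β - 1 := by linarith
  have hne : (1 : ℝ) - β ≠ 0 := by intro h; nlinarith
  rw [ge_iff_le, ← sub_nonneg]
  have key : (1 / 2) * ((2 * β - 1) * a * s + (1 - β) * p ^ 2) * u ^ 2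
      + a * p * u * v + a ^ 2 * v ^ 2
      - (c * (β - 1 / 2) * (a * u ^ 2)
        + (1 / (2 * (1 - β))) * (a * v - (β - 1) * p * u) ^ 2)
      = (β - 1 / 2) * a * (s - c) * u ^ 2
        + ((2 * β - 1) / (2 * (β - 1))) * a ^ 2 * v ^ 2 := by
    field_simp
    ring
  rw [key]
  have h1 : 0 ≤ (β - 1 / 2) * a * (s - c) * u ^ 2 :=
    mul_nonneg (mul_nonneg (mul_nonneg (by linarith) ha.le) (by linarith)) (sq_nonneg u)
  have h2 : 0 ≤ ((2 * β - 1) / (2 * (β - 1))) * a ^ 2 * v ^ 2 :=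
    mul_nonneg (mul_nonneg (div_nonneg (by linarith) (by linarith)) (sq_nonneg a)) (sq_nonneg v)
  linarith

theorem stmt_8 (φ : ℝ → ℝ) (β c : ℝ)
    (hφ : ContDiff ℝ (⊤ : ℕ∞) φ) (hφpos : ∀ x, 0 < φ x)
    (hc : 0 < c) (hφ'' : ∀ x, c ≤ deriv (deriv φ) x) (hβ : 1 < β) :
    ∀ f : ℝ → ℝ, ContDiff ℝ (⊤ : ℕ∞) f → ∀ x : ℝ,
      (1 / 2) * ((2 * β - 1) * φ x * deriv (deriv φ) x + (1 - β) * (deriv φ x) ^ 2)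
          * (deriv f x) ^ 2
        + φ x * deriv φ x * deriv f x * deriv (deriv f) x
        + (φ x) ^ 2 * (deriv (deriv f) x) ^ 2
      ≥ c * (β - 1 / 2) * (φ x * (deriv f x) ^ 2)
        + (1 / (2 * (1 - β)))
          * (φ x * deriv (deriv f) x - (β - 1) * deriv φ x * deriv f x) ^ 2 := by
  intro f hf x
  have := aux_8 (φ x) (deriv φ x) (deriv (deriv φ) x) (deriv f x) (deriv (deriv f) x)
    β c (hφpos x) (hφ'' x) hc hβ
  linarith [this]
end

section
/- Let n ≥ 1 be real and q ≥ 0, and set α = q·(q(4n-1) + 2n(n+2))/(2(n+2)²). Then α ≥ 0. Moreover, if n < -2, then α ≥ 0 if and only if 0 ≤ q ≤ 2n(n+2)/(1 - 4n); equivalently, writing q = (2-p)/(p-1) with p ∈ (1,2], α ≥ 0 if and only if p ≥ p* := 1 + (1-4n)/(2n² + 1). -/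
lemma aux_key (n q : ℝ) (hn : n < -2) (hq : 0 ≤ q) :
    (0 ≤ q * (q * (4 * n - 1) + 2 * n * (n + 2)) / (2 * (n + 2) ^ 2) ↔
      q ≤ 2 * n * (n + 2) / (1 - 4 * n)) := by
  have hden : (0:ℝ) < 2 * (n + 2) ^ 2 := by nlinarith
  have h14 : (0:ℝ) < 1 - 4 * n := by nlinarith
  rw [le_div_iff₀ hden, zero_mul, le_div_iff₀ h14]
  constructor
  · intro h
    rcases hq.eq_or_lt with h0 | h0
    · nlinarith
    · nlinarith
  · intro h
    have : 0 ≤ 2 * n * (n + 2) - q * (1 - 4 * n) := by linarith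
    nlinarith [mul_nonneg hq this]

theorem stmt_11 :
    (∀ n q : ℝ, 1 ≤ n → 0 ≤ q →
      0 ≤ q * (q * (4 * n - 1) + 2 * n * (n + 2)) / (2 * (n + 2) ^ 2)) ∧
    (∀ n q : ℝ, n < -2 → 0 ≤ q →
      (0 ≤ q * (q * (4 * n - 1) + 2 * n * (n + 2)) / (2 * (n + 2) ^ 2) ↔
        q ≤ 2 * n * (n + 2) / (1 - 4 * n))) ∧
    (∀ n p : ℝ, n < -2 → 1 < p → p ≤ 2 →
      (0 ≤ ((2 - p) / (p - 1)) *
            (((2 - p) / (p - 1)) * (4 * n - 1) + 2 * n * (n + 2)) / (2 * (n + 2) ^ 2) ↔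
        1 + (1 - 4 * n) / (2 * n ^ 2 + 1) ≤ p)) := by
  refine ⟨fun n q hn hq => ?_, fun n q hn hq => aux_key n q hn hq, fun n p hn hp1 hp2 => ?_⟩
  · apply div_nonneg _ (by positivity)
    apply mul_nonneg hq
    nlinarith
  · have hp : (0:ℝ) < p - 1 := by linarith
    have hq : 0 ≤ (2 - p) / (p - 1) := div_nonneg (by linarith) hp.le
    rw [aux_key n _ hn hq]
    have h14 : (0:ℝ) < 1 - 4 * n := by nlinarith
    have h2n : (0:ℝ) < 2 * n ^ 2 + 1 := by positivity
    rw [div_le_div_iff₀ hp h14]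
    constructor
    · intro h
      have : (1 - 4 * n) / (2 * n ^ 2 + 1) ≤ p - 1 := by
        rw [div_le_iff₀ h2n]; nlinarith
      linarith
    · intro h
      have : (1 - 4 * n) / (2 * n ^ 2 + 1) ≤ p - 1 := by linarith
      rw [div_le_iff₀ h2n] at this; nlinarith
end

section
/- Let μ be a probability measure and f a bounded measurable function with f ≥ δ > 0. Then the limit as p → 1⁺ of (p/(p-1))·[∫f² dμ - (∫f^{2/p} dμ)^p] equals ∫ f² log(f²/∫f² dμ) dμ. -/
/-!
With `X = log f`, the inner integral is a moment generating function:
`∫ f ^ (2 / p) dμ = mgf X μ (2 / p)`. The expression is then `-p` times the difference quotient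
at `1` of `G p = mgf X μ (2 / p) ^ p`, so its limit is `-G' 1`. Since `X` is bounded, `mgf X μ` is
differentiable everywhere with `mgf' 2 = ∫ X e^{2X} dμ = ∫ f² log f dμ`, and the chain rule
gives `G' 1 = I log I - 2 ∫ f² log f dμ` with `I = ∫ f² dμ`, which is minus the entropy of `f²`.
-/

open MeasureTheory Filter Topology ProbabilityTheory Real

lemma tendsto_div_sub_one_mul_sub_of_hasDerivAt {G : ℝ → ℝ} {G' : ℝ}
    (hG : HasDerivAt G G' 1) :
    Tendsto (fun p => p / (p - 1) * (G 1 - G p)) (𝓝[≠] 1) (𝓝 (-G')) := by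
  have hneg : Tendsto (fun p : ℝ => -p) (𝓝[≠] 1) (𝓝 (-1)) :=
    tendsto_nhdsWithin_of_tendsto_nhds (continuous_neg.tendsto 1)
  have hlim := hneg.mul (hasDerivAt_iff_tendsto_slope.mp hG)
  rw [neg_one_mul] at hlim
  refine hlim.congr' ?_
  filter_upwards [self_mem_nhdsWithin] with p (hp : p ≠ 1)
  rw [slope_def_field]
  field_simp [sub_ne_zero.mpr hp]
  ring

namespace ProbabilityTheory

variable {Ω : Type*} [MeasurableSpace Ω] {μ : Measure Ω} {X : Ω → ℝ}

lemma integrableExpSet_eq_univ_of_mem_Icc [IsFiniteMeasure μ] {a b : ℝ} (hX : AEMeasurable X μ)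
    (hab : ∀ᵐ ω ∂μ, X ω ∈ Set.Icc a b) : integrableExpSet X μ = Set.univ :=
  Set.eq_univ_of_forall fun _ => integrable_exp_mul_of_mem_Icc hX hab

lemma hasDerivAt_mgf_div_rpow [IsProbabilityMeasure μ] {c : ℝ}
    (hc : c ∈ interior (integrableExpSet X μ)) :
    HasDerivAt (fun p => mgf X μ (c / p) ^ p)
      (mgf X μ c * log (mgf X μ c) - c * μ[fun ω => X ω * exp (c * X ω)]) 1 := by
  have hinv : HasDerivAt (fun p : ℝ => c / p) (-c) 1 := by
    simpa [div_eq_mul_inv] using ((hasDerivAt_id (1 : ℝ)).inv one_ne_zero).const_mul c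
  have hint : Integrable (fun ω => exp (c * X ω)) μ :=
    interior_subset (s := integrableExpSet X μ) hc
  rw [← div_one c] at hc hint
  refine (((hasDerivAt_mgf hc).comp 1 hinv).rpow (hasDerivAt_id 1) (mgf_pos hint)).congr_deriv ?_
  simp only [Function.comp_apply, id, div_one, sub_self, rpow_zero, rpow_one]
  ring

lemma integral_exp_mul_mul_log_div_mgf [IsProbabilityMeasure μ] {c : ℝ}
    (hc : c ∈ interior (integrableExpSet X μ)) :
    ∫ ω, exp (c * X ω) * log (exp (c * X ω) / mgf X μ c) ∂μ
      = c * μ[fun ω => X ω * exp (c * X ω)] - mgf X μ c * log (mgf X μ c) := by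
  have hint : Integrable (fun ω => exp (c * X ω)) μ :=
    interior_subset (s := integrableExpSet X μ) hc
  have hpos := mgf_pos hint
  have hX1 : Integrable (fun ω => X ω * exp (c * X ω)) μ := by
    simpa using integrable_pow_mul_exp_of_mem_interior_integrableExpSet hc 1
  calc ∫ ω, exp (c * X ω) * log (exp (c * X ω) / mgf X μ c) ∂μ
      = ∫ ω, (c * (X ω * exp (c * X ω)) - log (mgf X μ c) * exp (c * X ω)) ∂μ := by
        refine integral_congr_ae (ae_of_all _ fun ω => ?_)
        dsimp only
        rw [log_div (exp_pos _).ne' hpos.ne', log_exp]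
        ring
    _ = _ := by
        rw [integral_sub (hX1.const_mul c) (hint.const_mul _),
          integral_const_mul, integral_const_mul]
        simp only [mgf]
        ring

end ProbabilityTheory

theorem stmt_16 {α : Type*} [MeasurableSpace α] (μ : Measure α) [IsProbabilityMeasure μ]
    (f : α → ℝ) (δ : ℝ) (hδ : 0 < δ) (hf : Measurable f)
    (hbdd : ∃ M, ∀ x, f x ≤ M) (hlb : ∀ x, δ ≤ f x) :
    Tendsto
      (fun p : ℝ => (p / (p - 1)) * (∫ x, f x ^ 2 ∂μ - (∫ x, f x ^ (2 / p) ∂μ) ^ p))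
      (𝓝[>] 1)
      (𝓝 (∫ x, f x ^ 2 * Real.log (f x ^ 2 / ∫ y, f y ^ 2 ∂μ) ∂μ)) := by
  obtain ⟨M, hM⟩ := hbdd
  have hfpos : ∀ x, 0 < f x := fun x => hδ.trans_le (hlb x)
  set X : α → ℝ := fun x => log (f x)
  have hX : integrableExpSet X μ = Set.univ :=
    integrableExpSet_eq_univ_of_mem_Icc hf.log.aemeasurable
      (ae_of_all _ fun x => ⟨log_le_log hδ (hlb x), log_le_log (hfpos x) (hM x)⟩)
  have hrpow : ∀ x t, f x ^ t = exp (t * X x) := fun x t => by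
    rw [rpow_def_of_pos (hfpos x), mul_comm]
  have hsq : ∀ x, f x ^ 2 = exp (2 * X x) := fun x => by
    rw [← hrpow, rpow_two]
  have hc : (2 : ℝ) ∈ interior (integrableExpSet X μ) := by simp [hX]
  have hlim := (tendsto_div_sub_one_mul_sub_of_hasDerivAt (hasDerivAt_mgf_div_rpow hc)).mono_left
    (nhdsGT_le_nhdsNE 1)
  rw [neg_sub, ← integral_exp_mul_mul_log_div_mgf hc] at hlim
  simpa only [hsq, hrpow, mgf, div_one, rpow_one] using hlim
end

section
/- Let L f = φ f'' - (β-1) φ' f' on ℝ with φ(x) = 1 + x² + x⁴ and β > 1/2. Then L satisfies the CD(2β-1, 4β-1) condition: Γ₂(f) ≥ (2β-1)Γ(f) + (1/(4β-1))(Lf)² for all smooth f, where Γ(f) = φ(f')² and Γ₂ is as in the 1D formula. -/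
theorem stmt_17 (β : ℝ) (hβ : 1 / 2 < β) (φ : ℝ → ℝ) (hφ : φ = fun x => 1 + x ^ 2 + x ^ 4) :
    ∀ f : ℝ → ℝ, ContDiff ℝ (⊤ : ℕ∞) f → ∀ x : ℝ,
      (1 / 2) * ((2 * β - 1) * φ x * deriv (deriv φ) x + (1 - β) * (deriv φ x) ^ 2)
          * (deriv f x) ^ 2
        + φ x * deriv φ x * deriv f x * deriv (deriv f) x
        + (φ x) ^ 2 * (deriv (deriv f) x) ^ 2
      ≥ (2 * β - 1) * (φ x * (deriv f x) ^ 2)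
        + (1 / (4 * β - 1))
          * (φ x * deriv (deriv f) x - (β - 1) * deriv φ x * deriv f x) ^ 2 := by
  intro f _ x
  have hφ1 : deriv φ = fun y => 2 * y + 4 * y ^ 3 := by
    funext y
    have h : HasDerivAt φ (2 * y + 4 * y ^ 3) y := by
      rw [hφ]
      have := ((hasDerivAt_pow 2 y).const_add 1).add (hasDerivAt_pow 4 y)
      exact this.congr_deriv (by push_cast; ring)
    exact h.deriv
  have hφ2 : deriv (deriv φ) x = 2 + 12 * x ^ 2 := by
    rw [hφ1]
    have h : HasDerivAt (fun y : ℝ => 2 * y + 4 * y ^ 3)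
        (2 + 12 * x ^ 2) x := by
      have := ((hasDerivAt_id x).const_mul 2).add ((hasDerivAt_pow 3 x).const_mul 4)
      exact this.congr_deriv (by push_cast; ring)
    exact h.deriv
  rw [hφ2, hφ1, hφ]
  set a := deriv f x
  set b := deriv (deriv f) x
  simp only
  have h4 : (0:ℝ) < 4 * β - 1 := by linarith
  rw [ge_iff_le, ← sub_nonneg]
  have key : (1 / (4 * β - 1)) * ((1 + x ^ 2 + x ^ 4) * b
      - (β - 1) * (2 * x + 4 * x ^ 3) * a) ^ 2
      = (2 * (2 * β - 1) * ((1 + x ^ 2 + x ^ 4) * b + 3 / 4 * (2 * x + 4 * x ^ 3) * a) ^ 2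
        + 9 * x ^ 2 * (β - 1 / 2) * (4 * β - 1) * a ^ 2) * (-(1 / (4 * β - 1)))
      + ((1 / 2) * ((2 * β - 1) * (1 + x ^ 2 + x ^ 4) * (2 + 12 * x ^ 2)
            + (1 - β) * (2 * x + 4 * x ^ 3) ^ 2) * a ^ 2
        + (1 + x ^ 2 + x ^ 4) * (2 * x + 4 * x ^ 3) * a * b
        + (1 + x ^ 2 + x ^ 4) ^ 2 * b ^ 2
        - (2 * β - 1) * ((1 + x ^ 2 + x ^ 4) * a ^ 2)) := by
    field_simp
    ring
  have t1 : 0 ≤ 2 * (2 * β - 1) * ((1 + x ^ 2 + x ^ 4) * b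
      + 3 / 4 * (2 * x + 4 * x ^ 3) * a) ^ 2 := by
    have := sq_nonneg ((1 + x ^ 2 + x ^ 4) * b + 3 / 4 * (2 * x + 4 * x ^ 3) * a)
    nlinarith
  have t2 : 0 ≤ 9 * x ^ 2 * (β - 1 / 2) * (4 * β - 1) * a ^ 2 := by
    have := mul_nonneg (mul_nonneg (by linarith : (0:ℝ) ≤ β - 1/2)
      (by linarith : (0:ℝ) ≤ 4 * β - 1)) (sq_nonneg (x * a))
    nlinarith
  have hinv : 0 < 1 / (4 * β - 1) := by positivity
  linarith [key, mul_nonneg (add_nonneg t1 t2) (le_of_lt hinv)]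
end
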